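/- For conjugation invariance of Milnor coefficients: if w' = g w g^{-1} in F(n) and the Magnus expansion of w has all degree-one coefficients in variables X_{j_1},...,X_{j_k} determined, then the coefficient of X_{j_1}⋯X_{j_k} in the Magnus expansion of w' equals that of w provided all lower-order coefficients μ(J) of w for proper subsequences J vanish. -/

import Mathlib

/-- The ring `ℤ⟨⟨X_1,…,X_n⟩⟩` of formal power series in `n` non-commuting variables with
integer coefficients, realized as coefficient functions on words in the variables. -/
def NC (n : ℕ) : Type := List (Fin n) → ℤ

namespace NC

variable {n : ℕ}

instance : AddCommGroup (NC n) := Pi.addCommGroup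

instance : One (NC n) := ⟨fun w => if w = [] then 1 else 0⟩

/-- Convolution (Cauchy) product of non-commutative power series. -/
instance : Mul (NC n) :=
  ⟨fun f g w => ∑ k ∈ Finset.range (w.length + 1), f (w.take k) * g (w.drop k)⟩

theorem mul_apply (f g : NC n) (w : List (Fin n)) :
    (f * g) w = ∑ k ∈ Finset.range (w.length + 1), f (w.take k) * g (w.drop k) := rfl

theorem one_apply (w : List (Fin n)) : (1 : NC n) w = if w = [] then 1 else 0 := rfl

theorem zero_apply (w : List (Fin n)) : (0 : NC n) w = 0 := rfl

theorem add_apply (f g : NC n) (w : List (Fin n)) : (f + g) w = f w + g w := rfl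

protected theorem mul_assoc (f g h : NC n) : f * g * h = f * (g * h) := by
  funext w
  rw [mul_apply, mul_apply]
  calc
    ∑ j ∈ Finset.range (w.length + 1), (f * g) (w.take j) * h (w.drop j)
        = ∑ j ∈ Finset.range (w.length + 1), ∑ i ∈ Finset.range (j + 1),
            f (w.take i) * g ((w.drop i).take (j - i)) * h (w.drop j) := by
          refine Finset.sum_congr rfl ?_
          intro j hj
          simp only [Finset.mem_range] at hj
          rw [mul_apply, Finset.sum_mul]
          have hlen : (w.take j).length = j := by rw [List.length_take]; omega
          rw [hlen]
          refine Finset.sum_congr rfl ?_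
          intro i hi
          simp only [Finset.mem_range] at hi
          have h1 : (w.take j).take i = w.take i := by
            rw [List.take_take]; congr 1; omega
          have h2 : (w.take j).drop i = (w.drop i).take (j - i) := List.drop_take
          rw [h1, h2]
    _ = ∑ i ∈ Finset.range (w.length + 1), ∑ k ∈ Finset.range ((w.length - i) + 1),
            f (w.take i) * g ((w.drop i).take k) * h (w.drop (i + k)) := by
          rw [Finset.sum_sigma', Finset.sum_sigma']
          refine Finset.sum_nbij' (fun p => ⟨p.2, p.1 - p.2⟩) (fun q => ⟨q.1 + q.2, q.1⟩)
            ?_ ?_ ?_ ?_ ?_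
          · rintro ⟨j, i⟩ hp
            simp only [Finset.mem_sigma, Finset.mem_range] at hp ⊢
            omega
          · rintro ⟨i, k⟩ hq
            simp only [Finset.mem_sigma, Finset.mem_range] at hq ⊢
            omega
          · rintro ⟨j, i⟩ hp
            simp only [Finset.mem_sigma, Finset.mem_range] at hp
            have hji : i + (j - i) = j := by omega
            simp [hji]
          · rintro ⟨i, k⟩ hq
            simp only [Finset.mem_sigma, Finset.mem_range] at hq
            have hik : i + k - i = k := by omega
            simp [hik]
          · rintro ⟨j, i⟩ hp
            simp only [Finset.mem_sigma, Finset.mem_range] at hp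
            have : i + (j - i) = j := by omega
            rw [this]
    _ = ∑ i ∈ Finset.range (w.length + 1), f (w.take i) * (g * h) (w.drop i) := by
          refine Finset.sum_congr rfl ?_
          intro i hi
          simp only [Finset.mem_range] at hi
          rw [mul_apply, Finset.mul_sum]
          have hlen : (w.drop i).length = w.length - i := by rw [List.length_drop]
          rw [hlen]
          refine Finset.sum_congr rfl ?_
          intro k hk
          rw [List.drop_drop]
          ring_nf

protected theorem one_mul (f : NC n) : 1 * f = f := by
  funext w
  rw [mul_apply]
  rw [Finset.sum_eq_single 0]
  · simp [one_apply]
  · intro b hb hb0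
    rw [one_apply]
    rw [if_neg, zero_mul]
    intro hnil
    rcases List.take_eq_nil_iff.mp hnil with h | h
    · exact hb0 h
    · subst h; simp at hb; exact hb0 hb
  · intro h; simp at h

protected theorem mul_one (f : NC n) : f * 1 = f := by
  funext w
  rw [mul_apply]
  rw [Finset.sum_eq_single w.length]
  · simp [one_apply]
  · intro b hb hbne
    rw [one_apply, if_neg, mul_zero]
    intro hnil
    have := List.drop_eq_nil_iff.mp hnil
    simp at hb
    omega
  · intro h; simp at h

instance instRing : Ring (NC n) where
  __ := (inferInstance : AddCommGroup (NC n))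
  mul := (· * ·)
  one := 1
  mul_assoc := NC.mul_assoc
  one_mul := NC.one_mul
  mul_one := NC.mul_one
  left_distrib f g h := by
    funext w
    simp [mul_apply, add_apply, mul_add, Finset.sum_add_distrib]
  right_distrib f g h := by
    funext w
    simp [mul_apply, add_apply, add_mul, Finset.sum_add_distrib]
  zero_mul f := by
    funext w
    simp [mul_apply, zero_apply]
  mul_zero f := by
    funext w
    simp [mul_apply, zero_apply]

/-- The variable `X_i` as a power series. -/
def X (i : Fin n) : NC n := fun w => if w = [i] then 1 else 0

/-- The geometric series `1 - X_i + X_i² - X_i³ + ⋯`. -/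
def geom (i : Fin n) : NC n :=
  fun w => if ∀ j ∈ w, j = i then (-1) ^ w.length else 0

theorem val_inv (i : Fin n) : (1 + X i) * geom i = 1 := by
  funext w
  rw [mul_apply]
  cases w with
  | nil => simp [one_apply, add_apply, X, geom]
  | cons a t =>
    rw [one_apply, if_neg (by simp)]
    rw [Finset.sum_eq_add 0 1 (by omega)]
    · have h0 : ((a :: t).take 0) = ([] : List (Fin n)) := rfl
      have h1 : ((a :: t).take 1) = [a] := rfl
      rw [h0, h1]
      simp only [List.drop_zero, List.drop_one]
      by_cases hai : a = i
      · subst hai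
        simp only [add_apply, one_apply, X, geom]
        by_cases ht : ∀ j ∈ t, j = a
        · simp [ht, pow_succ]
          simp [show (∀ a_1 ∈ t, a_1 = a) ↔ True from iff_of_true ht trivial]
        · have hat : ¬ ∀ j ∈ (a :: t), j = a := by simp [ht]
          simp [ht, hat]
      · simp only [add_apply, one_apply, X, geom]
        have h2 : ¬ ∀ j ∈ (a :: t), j = i := by
          intro hc; exact hai (hc a (by simp))
        have h3 : ¬ ([a] = [i]) := by simp [hai]
        simp [h2, h3]
        exact fun hc => absurd hc hai
    · intro c hc ⟨hc0, hc1⟩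
      simp only [Finset.mem_range, List.length_cons] at hc
      have : ((a :: t).take c) ≠ [] ∧ ((a :: t).take c) ≠ [i] := by
        constructor
        · simp [List.take_eq_nil_iff, hc0]
        · intro hcon
          have := congrArg List.length hcon
          simp [List.length_take] at this
          omega
      simp [add_apply, one_apply, X, this.1, this.2]
    · intro h; simp at h
    · intro h; simp at h

theorem inv_val (i : Fin n) : geom i * (1 + X i) = 1 := by
  funext w
  rw [mul_apply]
  rcases List.eq_nil_or_concat w with hw | ⟨t, a, hw⟩
  · subst hw; simp [one_apply, add_apply, X, geom]
  · rw [List.concat_eq_append] at hw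
    subst hw
    rw [one_apply, if_neg (by simp)]
    have hlen : (t ++ [a]).length = t.length + 1 := by simp
    rw [Finset.sum_eq_add t.length (t.length + 1) (by omega)]
    · have h1 : (t ++ [a]).take t.length = t := List.take_left
      have h2 : (t ++ [a]).drop t.length = [a] := List.drop_left
      have h3 : (t ++ [a]).take (t.length + 1) = t ++ [a] := by
        rw [List.take_of_length_le (by simp)]
      have h4 : (t ++ [a]).drop (t.length + 1) = [] := by
        rw [List.drop_of_length_le (by simp)]
      rw [h1, h2, h3, h4]
      have e1 : ((1 : NC n) + X i) [a] = if a = i then 1 else 0 := by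
        by_cases h : a = i <;> simp [add_apply, one_apply, X, h]
      have e2 : ((1 : NC n) + X i) [] = 1 := by
        simp [add_apply, one_apply, X]
      rw [e1, e2, mul_one]
      by_cases ha : a = i
      · rw [if_pos ha, mul_one]
        by_cases ht : ∀ j ∈ t, j = i
        · have hw' : ∀ j ∈ t ++ [a], j = i := by
            intro j hj
            rcases List.mem_append.mp hj with h | h
            · exact ht j h
            · simp only [List.mem_singleton] at h
              rw [h, ha]
          simp only [geom, if_pos ht, if_pos hw', hlen, pow_succ]
          ring
        · have hw' : ¬ ∀ j ∈ t ++ [a], j = i :=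
            fun hc => ht fun j hj => hc j (List.mem_append_left _ hj)
          simp only [geom, if_neg ht, if_neg hw']
          ring
      · rw [if_neg ha, mul_zero, zero_add]
        have hw' : ¬ ∀ j ∈ t ++ [a], j = i :=
          fun hc => ha (hc a (List.mem_append_right t (by simp)))
        simp only [geom, if_neg hw']
    · intro c hc ⟨hc0, hc1⟩
      simp only [Finset.mem_range, hlen] at hc
      have hne : ((t ++ [a]).drop c) ≠ [] ∧ ((t ++ [a]).drop c) ≠ [i] := by
        constructor
        · intro hcon
          have := congrArg List.length hcon
          simp at this
          omega
        · intro hcon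
          have := congrArg List.length hcon
          simp at this
          omega
      simp [add_apply, one_apply, X, hne.1, hne.2]
    · intro h
      exact absurd (by simp only [Finset.mem_range, hlen]; omega) h
    · intro h
      exact absurd (by simp only [Finset.mem_range, hlen]; omega) h

/-- `1 + X_i` as a unit of `ℤ⟨⟨X_1,…,X_n⟩⟩`, with inverse `1 - X_i + X_i² - ⋯`. -/
def magnusUnit (i : Fin n) : (NC n)ˣ where
  val := 1 + X i
  inv := geom i
  val_inv := val_inv i
  inv_val := inv_val i

end NC

/-- The Magnus expansion `F(n) → ℤ⟨⟨X_1,…,X_n⟩⟩ˣ`, `x_i ↦ 1 + X_i`. -/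
def magnus (n : ℕ) : FreeGroup (Fin n) →* (NC n)ˣ := FreeGroup.lift NC.magnusUnit

/-- The coefficient of the monomial `X_{u 0} ⋯ X_{u k}` in the Magnus expansion of `w`. -/
def magnusCoeff {n : ℕ} (w : FreeGroup (Fin n)) (u : List (Fin n)) : ℤ :=
  ((magnus n w : (NC n)ˣ) : NC n) u

/-! The expansion of `g w g⁻¹` is `1 + A (W - 1) A⁻¹`, where `A`, `W` are the expansions of `g`, `w`.
The hypothesis says that `W - 1` vanishes on every proper sublist of `u`, including `[]`; then in the
coefficient of `u` in `A (W - 1) A⁻¹` only the split of `u` that gives all of it to the middle factor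
survives, and it is weighted by the constant terms of `A` and `A⁻¹`, both `1`. -/

namespace NC

variable {n : ℕ}

theorem sub_apply (f g : NC n) (w : List (Fin n)) : (f - g) w = f w - g w := rfl

def constantCoeff : NC n →+* ℤ where
  toFun f := f []
  map_one' := by simp [one_apply]
  map_mul' f g := by simp [mul_apply]
  map_zero' := rfl
  map_add' _ _ := rfl

theorem constantCoeff_apply (f : NC n) : constantCoeff f = f [] := rfl

def VanishesOnProperSublists (f : NC n) (u : List (Fin n)) : Prop :=
  ∀ t, t.Sublist u → t ≠ u → f t = 0

namespace VanishesOnProperSublists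

variable {f : NC n} {u : List (Fin n)}

theorem apply_of_length_lt (hf : VanishesOnProperSublists f u) {t : List (Fin n)}
    (ht : t.Sublist u) (hlt : t.length < u.length) : f t = 0 :=
  hf t ht (by rintro rfl; exact hlt.false)

theorem of_sublist (hf : VanishesOnProperSublists f u) {t : List (Fin n)} (ht : t.Sublist u) :
    VanishesOnProperSublists f t := fun _ hs hne =>
  hf.apply_of_length_lt (hs.trans ht) <|
    (lt_of_not_ge fun h => hne (hs.eq_of_length_le h)).trans_le ht.length_le

theorem mul_apply_left (hf : VanishesOnProperSublists f u) (a : NC n) :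
    (a * f) u = a [] * f u := by
  rw [mul_apply, Finset.sum_eq_single 0 _ (by simp)]
  · simp
  · intro k hk hk0
    have hlt : (u.drop k).length < u.length := by
      simp only [Finset.mem_range] at hk
      simp only [List.length_drop]
      omega
    rw [hf.apply_of_length_lt (List.drop_sublist k u) hlt, mul_zero]

theorem mul_apply_right (hf : VanishesOnProperSublists f u) (c : NC n) :
    (f * c) u = f u * c [] := by
  rw [mul_apply, Finset.sum_eq_single u.length _ (by simp)]
  · simp
  · intro k hk hku
    have hlt : (u.take k).length < u.length := by
      simp only [Finset.mem_range] at hk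
      simp only [List.length_take]
      omega
    rw [hf.apply_of_length_lt (List.take_sublist k u) hlt, zero_mul]

theorem mul_left (hf : VanishesOnProperSublists f u) (a : NC n) :
    VanishesOnProperSublists (a * f) u := fun t ht hne => by
  rw [(hf.of_sublist ht).mul_apply_left, hf t ht hne, mul_zero]

end VanishesOnProperSublists

end NC

theorem constantCoeff_magnus (n : ℕ) (w : FreeGroup (Fin n)) :
    NC.constantCoeff (magnus n w : NC n) = 1 := by
  have h : (Units.map NC.constantCoeff.toMonoidHom).comp (magnus n) = 1 := by
    refine FreeGroup.ext_hom _ _ fun i => Units.ext ?_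
    simp [magnus, NC.constantCoeff_apply, NC.magnusUnit, NC.add_apply, NC.one_apply, NC.X]
  simpa using congrArg (fun φ => ((φ w : ℤˣ) : ℤ)) h

theorem magnus_conj (n : ℕ) (g w : FreeGroup (Fin n)) :
    (magnus n (g * w * g⁻¹) : NC n) =
      magnus n g * ((magnus n w : NC n) - 1) * (magnus n g⁻¹ : NC n) + 1 := by
  simp only [map_mul, map_inv, Units.val_mul, mul_sub, sub_mul, mul_one, Units.mul_inv]
  abel

/-- First-nonvanishing-coefficient conjugation invariance of Milnor coefficients:
if `w' = g w g⁻¹` and all coefficients `μ_w(J)` of `w` for proper nonempty subsequences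
`J` of `u` vanish, then the coefficient of the monomial `X_{j_1}⋯X_{j_k}` indexed by `u`
in the Magnus expansion of `w'` equals that of `w`. -/
theorem magnusCoeff_conj (n : ℕ) (w g : FreeGroup (Fin n)) (u : List (Fin n))
    (h : ∀ v : List (Fin n), v.Sublist u → v ≠ u → v ≠ [] → magnusCoeff w v = 0) :
    magnusCoeff (g * w * g⁻¹) u = magnusCoeff w u := by
  have hnil (x : FreeGroup (Fin n)) : (magnus n x : NC n) [] = 1 := constantCoeff_magnus n x
  have hW : NC.VanishesOnProperSublists ((magnus n w : NC n) - 1) u := by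
    intro t ht hne
    rcases eq_or_ne t [] with rfl | ht0
    · simp [NC.sub_apply, NC.one_apply, hnil]
    · rw [NC.sub_apply, NC.one_apply, if_neg ht0, sub_zero]
      exact h t ht hne ht0
  unfold magnusCoeff
  rw [magnus_conj, NC.add_apply, (hW.mul_left _).mul_apply_right, hW.mul_apply_left,
    hnil, hnil, NC.sub_apply]
  ring
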